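/- Let P_{A,E} be a normalized joint distribution on 𝒜 × ℰ, M ≥ 3, ε > 0, and s ∈ (0, 1] such that M^s·e^{−s·H^↓_{1+s}(A|E|P_{A,E})} ≤ 1. Then Δ_{I,2}(M,ε|P_{A,E}) ≤ η(M^s·e^{−s·H^↓_{1+s}(A|E|P_{A,E})}, ε + log M). -/

import Mathlib

open Real Finset Filter

attribute [local instance] Classical.propDecidable

namespace Hayashi

def IsSubDist {S : Type*} [Fintype S] (P : S → ℝ) : Prop :=
  (∀ x, 0 ≤ P x) ∧ ∑ x, P x ≤ 1

def IsDist {S : Type*} [Fintype S] (P : S → ℝ) : Prop :=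
  (∀ x, 0 ≤ P x) ∧ ∑ x, P x = 1

variable {A E : Type*} [Fintype A] [Fintype E]

noncomputable def margE (P : A × E → ℝ) (e : E) : ℝ := ∑ a, P (a, e)

noncomputable def margNorm (P : A × E → ℝ) (e : E) : ℝ := margE P e / ∑ e', margE P e'

noncomputable def l1 (P P' : A × E → ℝ) : ℝ := ∑ a, ∑ e, |P (a, e) - P' (a, e)|

noncomputable def eta (x y : ℝ) : ℝ := -x * Real.log x + x * y

noncomputable def condRenyi (P : A × E → ℝ) (Q : E → ℝ) (s : ℝ) : ℝ :=
  (-1 / s) * Real.log (∑ a, ∑ e, P (a, e) ^ (1 + s) * Q e ^ (-s))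

noncomputable def condRenyiUp (P : A × E → ℝ) (s : ℝ) : ℝ :=
  sSup {x | ∃ Q : E → ℝ, IsDist Q ∧ (∀ e, 0 < Q e) ∧ x = condRenyi P Q s}

noncomputable def condRenyiDown (P : A × E → ℝ) (s : ℝ) : ℝ :=
  condRenyi P (margNorm P) s

noncomputable def condEnt (P : A × E → ℝ) : ℝ :=
  -∑ a, ∑ e, P (a, e) * Real.log (P (a, e) / margE P e)

noncomputable def H2cond (P : A × E → ℝ) (Q : E → ℝ) : ℝ :=
  -Real.log (∑ a, ∑ e, P (a, e) ^ 2 / Q e)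

noncomputable def d2cond (P : A × E → ℝ) (Q : E → ℝ) : ℝ :=
  ∑ a, ∑ e, (P (a, e) - margE P e / (Fintype.card A : ℝ)) ^ 2 / Q e

noncomputable def d1' (P : A × E → ℝ) : ℝ :=
  ∑ a, ∑ e, |P (a, e) - margE P e / (Fintype.card A : ℝ)|

noncomputable def Iprime (P : A × E → ℝ) : ℝ :=
  ∑ a, ∑ e, P (a, e) * Real.log (P (a, e) * (Fintype.card A : ℝ) / margE P e)

noncomputable def Hmin (P : A × E → ℝ) (Q : E → ℝ) : ℝ :=
  -Real.log (sSup {r | ∃ a e, 0 < Q e ∧ r = P (a, e) / Q e})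

noncomputable def D2div {E : Type*} [Fintype E] (P Q : E → ℝ) : ℝ :=
  Real.log (∑ e, P e ^ 2 / Q e)

noncomputable def pushHash {B : Type*} (f : A → B) (P : A × E → ℝ) : B × E → ℝ :=
  fun be => ∑ a, (if f a = be.1 then P (a, be.2) else 0)

noncomputable def Delta_d2 (M ε : ℝ) (P : A × E → ℝ) : ℝ :=
  sInf {x | ∃ (Q : E → ℝ) (P' : A × E → ℝ), IsDist Q ∧ (∀ e, 0 < Q e) ∧ IsSubDist P' ∧
    x = 2 * l1 P P' + Real.sqrt ε * Real.sqrt M * Real.exp (-H2cond P' Q / 2)}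

noncomputable def Delta_I2 (M ε : ℝ) (P : A × E → ℝ) : ℝ :=
  sInf {x | ∃ P' : A × E → ℝ, IsSubDist P' ∧ (∀ e, margE P' e ≤ margE P e) ∧
    x = eta (l1 P P') (Real.log M) + ε * M * Real.exp (-H2cond P' (margE P))}

noncomputable def Delta_dmin (M ε : ℝ) (P : A × E → ℝ) : ℝ :=
  sInf {x | ∃ (Q : E → ℝ) (P' : A × E → ℝ), IsDist Q ∧ (∀ e, 0 < Q e) ∧ IsSubDist P' ∧
    x = 2 * l1 P P' + Real.sqrt ε * Real.sqrt M * Real.exp (-Hmin P' Q / 2)}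

noncomputable def Delta_Imin (M ε : ℝ) (P : A × E → ℝ) : ℝ :=
  sInf {x | ∃ P' : A × E → ℝ, IsSubDist P' ∧ (∀ e, margE P' e ≤ margE P e) ∧
    x = eta (l1 P P') (Real.log M) + ε * M * Real.exp (-Hmin P' (margE P))}

noncomputable def DeltaBar_Imin (M ε : ℝ) (P : A × E → ℝ) : ℝ :=
  sInf {x | ∃ P' : A × E → ℝ, IsSubDist P' ∧ (∀ e, margE P' e ≤ margE P e) ∧
    x = eta (l1 P P') (Real.log M) + Real.log (1 + ε * M * Real.exp (-Hmin P' (margE P)))}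

noncomputable def Pn (P : A × E → ℝ) (n : ℕ) : (Fin n → A) × (Fin n → E) → ℝ :=
  fun ae => ∏ i, P (ae.1 i, ae.2 i)

end Hayashi

namespace Hayashi

/-!
Write `Q = P_E` and `v = M^s ∑ P^{1+s} Q^{-s}`, which is `M^s e^{-s H^↓_{1+s}(A|E)}`.
Cut `P` down to `P' = P · 1[M P ≤ Q]`. With `r = M P / Q`, the mass removed at a point is
`P ≤ r^s P` (there `r ≥ 1`), and the collision term of a kept point is `M P^2 / Q = r P ≤ r^s P`
(there `r ≤ 1` and `s ≤ 1`). Summing, `‖P - P'‖₁ ≤ v` and `M e^{-H₂(A|E|P'‖Q)} ≤ v`, and since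
`η(·, log M)` is increasing on `[0, 1]` once `log M ≥ 1`, the witness `P'` gives
`η(v, log M) + ε v = η(v, ε + log M)`.
If `v = 1` the cut may remove everything, where `e^{-H₂}` takes the junk value `e^{log 0} = 1`;
but then the claim is the trivial bound `ε + log M`, witnessed by `P / M`.
-/

lemma eta_one (y : ℝ) : eta 1 y = y := by
  simp [eta]

lemma eta_nonneg {t M : ℝ} (ht : 0 ≤ t) (htM : t ≤ M) : 0 ≤ eta t (log M) := by
  rcases ht.eq_or_lt with rfl | ht
  · simp [eta]
  · have := mul_nonneg ht.le (sub_nonneg.2 (log_le_log ht htM))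
    unfold eta
    linarith

lemma eta_le_eta {t v y : ℝ} (ht : 0 ≤ t) (htv : t ≤ v) (hv : v ≤ 1) (hy : 1 ≤ y) :
    eta t y ≤ eta v y := by
  -- the tangent of `x ↦ x log x` at `v` lies below the graph
  have htangent : t - v ≤ t * log t - t * log v := by
    rcases ht.eq_or_lt with rfl | ht
    · simpa using ht.trans htv
    · have hv0 := ht.trans_le htv
      have := mul_le_mul_of_nonneg_left (log_le_sub_one_of_pos (div_pos hv0 ht)) ht.le
      have hcancel : t * (v / t - 1) = v - t := by field_simp
      rw [log_div hv0.ne' ht.ne'] at this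
      linarith
  have hlogv : log v ≤ 0 := log_nonpos (ht.trans htv) hv
  unfold eta
  nlinarith [mul_nonneg (sub_nonneg.2 htv) (by linarith : 0 ≤ y - 1 - log v)]

lemma renyi_term_eq {M p q s : ℝ} (hM : 0 ≤ M) (hp : 0 ≤ p) (hq : 0 ≤ q) (hs : 0 ≤ s) :
    M ^ s * (p ^ (1 + s) * q ^ (-s)) = (M * p / q) ^ s * p := by
  rw [div_rpow (mul_nonneg hM hp) hq, mul_rpow hM hp, rpow_add' hp (by linarith), rpow_one,
    rpow_neg hq]
  ring

lemma le_renyi_term_of_le_mul {M p q s : ℝ} (hM : 0 ≤ M) (hp : 0 ≤ p) (hq : 0 < q)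
    (hs : 0 ≤ s) (h : q ≤ M * p) : p ≤ M ^ s * (p ^ (1 + s) * q ^ (-s)) := by
  rw [renyi_term_eq hM hp hq.le hs]
  exact le_mul_of_one_le_left hp (one_le_rpow ((one_le_div hq).2 h) hs)

lemma mul_sq_div_le_renyi_term {M p q s : ℝ} (hM : 0 ≤ M) (hp : 0 ≤ p) (hq : 0 < q)
    (hs₀ : 0 ≤ s) (hs₁ : s ≤ 1) (h : M * p ≤ q) :
    M * (p ^ 2 / q) ≤ M ^ s * (p ^ (1 + s) * q ^ (-s)) := by
  rw [renyi_term_eq hM hp hq.le hs₀]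
  calc M * (p ^ 2 / q) = M * p / q * p := by ring
    _ ≤ (M * p / q) ^ s * p :=
      mul_le_mul_of_nonneg_right
        (self_le_rpow_of_le_one (by positivity) ((div_le_one hq).2 h) hs₁) hp

lemma IsDist.isSubDist {S : Type*} [Fintype S] {P : S → ℝ} (hP : IsDist P) : IsSubDist P :=
  ⟨hP.1, hP.2.le⟩

lemma exists_pos_of_sum_pos {S : Type*} [Fintype S] {f : S → ℝ} (h : 0 < ∑ x, f x) :
    ∃ x, 0 < f x := by
  obtain ⟨x, -, hx⟩ := exists_lt_of_sum_lt (s := univ) (f := fun _ => (0 : ℝ)) (g := f)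
    (by simpa using h)
  exact ⟨x, hx⟩

lemma IsDist.exists_pos {S : Type*} [Fintype S] {P : S → ℝ} (hP : IsDist P) : ∃ x, 0 < P x :=
  exists_pos_of_sum_pos (hP.2 ▸ one_pos)

variable {A E : Type*}

noncomputable def threshold (M : ℝ) (P : A × E → ℝ) (Q : E → ℝ) : A × E → ℝ :=
  fun x => if M * P x ≤ Q x.2 then P x else 0

lemma threshold_le {M : ℝ} {P : A × E → ℝ} {Q : E → ℝ} (hP : ∀ x, 0 ≤ P x) (x : A × E) :
    threshold M P Q x ≤ P x := by
  unfold threshold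
  split_ifs
  exacts [le_rfl, hP x]

lemma threshold_nonneg {M : ℝ} {P : A × E → ℝ} {Q : E → ℝ} (hP : ∀ x, 0 ≤ P x) (x : A × E) :
    0 ≤ threshold M P Q x := by
  unfold threshold
  split_ifs
  exacts [hP x, le_rfl]

lemma le_margE [Fintype A] {P : A × E → ℝ} (hP : ∀ x, 0 ≤ P x) (a : A) (e : E) :
    P (a, e) ≤ margE P e :=
  single_le_sum (fun a _ => hP (a, e)) (mem_univ a)

variable [Fintype A] [Fintype E]

lemma sum_sum_pos {f : A × E → ℝ} (hf : ∀ x, 0 ≤ f x) {x : A × E} (hx : 0 < f x) :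
    0 < ∑ a, ∑ e, f (a, e) :=
  (sum_pos' (fun x _ => hf x) ⟨x, mem_univ x, hx⟩).trans_eq (Fintype.sum_prod_type f)

lemma sum_margE (P : A × E → ℝ) : ∑ e, margE P e = ∑ x, P x := by
  rw [Fintype.sum_prod_type, sum_comm]
  rfl

lemma margNorm_eq_margE {P : A × E → ℝ} (hP : IsDist P) : margNorm P = margE P := by
  funext e
  rw [margNorm, sum_margE, hP.2, div_one]

lemma exp_neg_mul_condRenyiDown {P : A × E → ℝ} (hP : IsDist P) {s : ℝ} (hs : s ≠ 0) :
    exp (-(s * condRenyiDown P s)) = ∑ a, ∑ e, P (a, e) ^ (1 + s) * margE P e ^ (-s) := by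
  obtain ⟨⟨a, e⟩, hx⟩ := hP.exists_pos
  have hQ := le_margE hP.1
  have hpos : 0 < ∑ a, ∑ e, P (a, e) ^ (1 + s) * margE P e ^ (-s) :=
    sum_sum_pos (f := fun x => P x ^ (1 + s) * margE P x.2 ^ (-s))
      (fun x => mul_nonneg (rpow_nonneg (hP.1 x) _) (rpow_nonneg ((hP.1 x).trans (hQ x.1 x.2)) _))
      (x := (a, e)) (mul_pos (rpow_pos_of_pos hx _) (rpow_pos_of_pos (hx.trans_le (hQ a e)) _))
  rw [condRenyiDown, margNorm_eq_margE hP, condRenyi,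
    show ∀ r, -(s * (-1 / s * r)) = r from fun r => by field_simp, exp_log hpos]

lemma l1_nonneg (P P' : A × E → ℝ) : 0 ≤ l1 P P' :=
  sum_nonneg fun _ _ => sum_nonneg fun _ _ => abs_nonneg _

lemma l1_eq_sum_sub {P P' : A × E → ℝ} (h : ∀ x, P' x ≤ P x) :
    l1 P P' = ∑ x, P x - ∑ x, P' x := by
  rw [← sum_sub_distrib, Fintype.sum_prod_type]
  exact sum_congr rfl fun a _ => sum_congr rfl fun e _ => abs_of_nonneg (sub_nonneg.2 (h _))

lemma l1_le_two {P P' : A × E → ℝ} (hP : IsSubDist P) (hP' : IsSubDist P') : l1 P P' ≤ 2 := by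
  have : l1 P P' ≤ ∑ x, P x + ∑ x, P' x := by
    rw [← sum_add_distrib, Fintype.sum_prod_type]
    refine sum_le_sum fun a _ => sum_le_sum fun e _ => ?_
    rw [abs_le]
    constructor <;> linarith [hP.1 (a, e), hP'.1 (a, e)]
  linarith [hP.2, hP'.2]

lemma exp_neg_H2cond {P : A × E → ℝ} {Q : E → ℝ} (h : 0 < ∑ a, ∑ e, P (a, e) ^ 2 / Q e) :
    exp (-H2cond P Q) = ∑ a, ∑ e, P (a, e) ^ 2 / Q e := by
  rw [H2cond, neg_neg, exp_log h]

section Collision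

variable {P : A × E → ℝ} {Q : E → ℝ}

lemma collision_le_sum (hP : ∀ x, 0 ≤ P x) (hPQ : ∀ a e, P (a, e) ≤ Q e) :
    ∑ a, ∑ e, P (a, e) ^ 2 / Q e ≤ ∑ x, P x := by
  rw [Fintype.sum_prod_type]
  refine sum_le_sum fun a _ => sum_le_sum fun e _ => ?_
  refine div_le_of_le_mul₀ ((hP _).trans (hPQ a e)) (hP _) ?_
  rw [sq]
  exact mul_le_mul_of_nonneg_left (hPQ a e) (hP _)

lemma collision_pos (hP : ∀ x, 0 ≤ P x) (hPQ : ∀ a e, P (a, e) ≤ Q e) {a : A} {e : E}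
    (hx : 0 < P (a, e)) : 0 < ∑ a, ∑ e, P (a, e) ^ 2 / Q e :=
  sum_sum_pos (fun x => div_nonneg (sq_nonneg _) ((hP x).trans (hPQ x.1 x.2)))
    (x := (a, e)) (div_pos (pow_pos hx 2) (hx.trans_le (hPQ a e)))

end Collision

lemma Delta_I2_le {M ε : ℝ} {P P' : A × E → ℝ} (hP : IsSubDist P) (hM : 2 ≤ M) (hε : 0 ≤ ε)
    (hP' : IsSubDist P') (hmarg : ∀ e, margE P' e ≤ margE P e) :
    Delta_I2 M ε P ≤ eta (l1 P P') (log M) + ε * M * exp (-H2cond P' (margE P)) := by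
  refine csInf_le ⟨0, ?_⟩ ⟨P', hP', hmarg, rfl⟩
  rintro _ ⟨R, hR, -, rfl⟩
  have := eta_nonneg (l1_nonneg P R) ((l1_le_two hP hR).trans hM)
  have : 0 ≤ ε * M * exp (-H2cond R (margE P)) := by positivity
  linarith

lemma Delta_I2_le_add_log {M ε : ℝ} {P : A × E → ℝ} (hP : IsDist P) (hM : exp 1 ≤ M)
    (hε : 0 ≤ ε) : Delta_I2 M ε P ≤ ε + log M := by
  have hM₂ : 2 ≤ M := by linarith [add_one_le_exp 1]
  have hlogM : 1 ≤ log M := (le_log_iff_exp_le (by linarith)).2 hM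
  set c := M⁻¹
  have hc₀ : 0 < c := by positivity
  have hc₁ : c ≤ 1 := inv_le_one_of_one_le₀ (by linarith)
  have hcM : c * M = 1 := inv_mul_cancel₀ (by linarith)
  have hcP : ∀ x, c * P x ≤ P x := fun x => mul_le_of_le_one_left (hP.1 x) hc₁
  have hsub : IsSubDist (c * P ·) :=
    ⟨fun x => mul_nonneg hc₀.le (hP.1 x), (sum_le_sum fun x _ => hcP x).trans hP.2.le⟩
  have hl1 : l1 P (c * P ·) = 1 - c := by rw [l1_eq_sum_sub hcP, ← mul_sum, hP.2, mul_one]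
  set T := ∑ a, ∑ e, P (a, e) ^ 2 / margE P e
  obtain ⟨⟨a, e⟩, hx⟩ := hP.exists_pos
  have hT₀ : 0 < T := collision_pos hP.1 (le_margE hP.1) hx
  have hT₁ : T ≤ 1 := (collision_le_sum hP.1 (le_margE hP.1)).trans hP.2.le
  have hcoll : ∑ a, ∑ e, (c * P (a, e)) ^ 2 / margE P e = c ^ 2 * T := by
    simp_rw [T, mul_sum, mul_pow, mul_div_assoc]
  have hexp : exp (-H2cond (c * P ·) (margE P)) = c ^ 2 * T := by
    rw [exp_neg_H2cond (by rw [hcoll]; positivity), hcoll]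
  have hnml : -(1 - c) * log (1 - c) ≤ c := by
    have h := negMulLog_le_one_sub_self (x := 1 - c) (by linarith)
    unfold negMulLog at h
    linarith
  calc Delta_I2 M ε P ≤ eta (1 - c) (log M) + ε * M * (c ^ 2 * T) := by
        simpa only [hl1, hexp] using Delta_I2_le hP.isSubDist hM₂ hε hsub
          fun e => sum_le_sum fun a _ => hcP _
    _ = -(1 - c) * log (1 - c) + (1 - c) * log M + ε * c * T := by
        rw [eta, show ε * M * (c ^ 2 * T) = ε * c * T * (c * M) by ring, hcM]
        ring
    _ ≤ ε + log M := by nlinarith [mul_le_mul_of_nonneg_left hT₁ (mul_nonneg hε hc₀.le)]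

section Threshold

variable {M s : ℝ} {P : A × E → ℝ} {Q : E → ℝ}

lemma l1_threshold_le (hP : ∀ x, 0 ≤ P x) (hPQ : ∀ a e, P (a, e) ≤ Q e) (hM : 0 < M)
    (hs : 0 ≤ s) :
    l1 P (threshold M P Q) ≤ M ^ s * ∑ a, ∑ e, P (a, e) ^ (1 + s) * Q e ^ (-s) := by
  simp_rw [l1, mul_sum]
  refine sum_le_sum fun a _ => sum_le_sum fun e _ => ?_
  have hp := hP (a, e)
  have hq := hp.trans (hPQ a e)
  unfold threshold
  split_ifs with h
  · simpa using by positivity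
  · push Not at h
    rw [sub_zero, abs_of_nonneg hp]
    exact le_renyi_term_of_le_mul hM.le hp
      ((pos_of_mul_pos_right (hq.trans_lt h) hM.le).trans_le (hPQ a e)) hs h.le

lemma mul_collision_threshold_le (hP : ∀ x, 0 ≤ P x) (hPQ : ∀ a e, P (a, e) ≤ Q e)
    (hM : 0 < M) (hs₀ : 0 ≤ s) (hs₁ : s ≤ 1) :
    M * ∑ a, ∑ e, threshold M P Q (a, e) ^ 2 / Q e ≤
      M ^ s * ∑ a, ∑ e, P (a, e) ^ (1 + s) * Q e ^ (-s) := by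
  simp_rw [mul_sum]
  refine sum_le_sum fun a _ => sum_le_sum fun e _ => ?_
  have hp := hP (a, e)
  have hq := hp.trans (hPQ a e)
  unfold threshold
  split_ifs with h
  · rcases hq.eq_or_lt with hq | hq
    · simpa [← hq] using by positivity
    · exact mul_sq_div_le_renyi_term hM.le hp hq hs₀ hs₁ h
  · simpa using by positivity

end Threshold

lemma Delta_I2_le_eta_of_lt_one {M ε s : ℝ} {P : A × E → ℝ} (hP : IsDist P) (hM : exp 1 ≤ M)
    (hε : 0 ≤ ε) (hs₀ : 0 ≤ s) (hs₁ : s ≤ 1)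
    (hv : M ^ s * ∑ a, ∑ e, P (a, e) ^ (1 + s) * margE P e ^ (-s) < 1) :
    Delta_I2 M ε P ≤
      eta (M ^ s * ∑ a, ∑ e, P (a, e) ^ (1 + s) * margE P e ^ (-s)) (ε + log M) := by
  have hM₀ : 0 < M := (exp_pos 1).trans_le hM
  set v := M ^ s * ∑ a, ∑ e, P (a, e) ^ (1 + s) * margE P e ^ (-s)
  set P' := threshold M P (margE P)
  have hP'P := threshold_le (M := M) (Q := margE P) hP.1
  have hl1 : l1 P P' ≤ v := l1_threshold_le hP.1 (le_margE hP.1) hM₀ hs₀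
  have hcoll := mul_collision_threshold_le hP.1 (le_margE hP.1) hM₀ hs₀ hs₁
  obtain ⟨⟨a, e⟩, hx⟩ : ∃ x, 0 < P' x :=
    exists_pos_of_sum_pos (by linarith [l1_eq_sum_sub hP'P, hP.2])
  have hexp := exp_neg_H2cond (collision_pos (threshold_nonneg hP.1)
    (fun a e => (hP'P _).trans (le_margE hP.1 a e)) hx)
  calc Delta_I2 M ε P
      ≤ eta (l1 P P') (log M) + ε * M * exp (-H2cond P' (margE P)) :=
        Delta_I2_le hP.isSubDist (by linarith [add_one_le_exp 1]) hε
          ⟨threshold_nonneg hP.1, (sum_le_sum fun x _ => hP'P x).trans hP.2.le⟩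
          fun e => sum_le_sum fun a _ => hP'P _
    _ ≤ eta v (log M) + ε * v := by
        rw [hexp, mul_assoc]
        gcongr
        exact eta_le_eta (l1_nonneg ..) hl1 hv.le ((le_log_iff_exp_le hM₀).2 hM)
    _ = eta v (ε + log M) := by unfold eta; ring

theorem statement12_general {A E : Type*} [Fintype A] [Fintype E]
    (P : A × E → ℝ) (hP : IsDist P)
    (M ε s : ℝ) (hM : 3 ≤ M) (hε : 0 < ε) (hs : s ∈ Set.Ioc (0 : ℝ) 1)
    (hsmall : M ^ s * Real.exp (-(s * condRenyiDown P s)) ≤ 1) :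
    Delta_I2 M ε P ≤
      eta (M ^ s * Real.exp (-(s * condRenyiDown P s))) (ε + Real.log M) := by
  obtain ⟨hs₀, hs₁⟩ := hs
  have hMe : exp 1 ≤ M := by linarith [exp_one_lt_d9]
  rw [exp_neg_mul_condRenyiDown hP hs₀.ne'] at hsmall ⊢
  rcases hsmall.eq_or_lt with hv | hv
  · rw [hv, eta_one]
    exact Delta_I2_le_add_log hP hMe hε.le
  · exact Delta_I2_le_eta_of_lt_one hP hMe hε.le hs₀.le hs₁ hv

/-- Theorem `Lem12` of the paper:
`Δ_{I,2}(M,ε|P) ≤ η(M^s·e^{-s·H^↓_{1+s}(A|E|P)}, ε + log M)` for `s ∈ (0,1]`. -/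
theorem statement12 {A E : Type*} [Fintype A] [Fintype E] [Nonempty A] [Nonempty E]
    (P : A × E → ℝ) (hP : IsDist P)
    (M ε s : ℝ) (hM : 3 ≤ M) (hε : 0 < ε) (hs : s ∈ Set.Ioc (0 : ℝ) 1)
    (hsmall : M ^ s * Real.exp (-(s * condRenyiDown P s)) ≤ 1) :
    Delta_I2 M ε P ≤
      eta (M ^ s * Real.exp (-(s * condRenyiDown P s))) (ε + Real.log M) :=
  statement12_general P hP M ε s hM hε hs hsmall

end Hayashi
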